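/- Let m ≥ 2, α = [0; overline{1,m}], and let S_α(n) = ∑_{i≥0} ε_i(n) and S_{α,k}(n) = ∑_{0≤i<k} ε_i(n) be the full and truncated sum-of-digits functions of the Ostrowski representation n = ∑_i ε_i(n)·q_i. Then for all integers N ≥ 0, k ≥ 2, r ≥ 0: the number of n < N with S_α(n+r) − S_α(n) ≠ S_{α,k}(n+r) − S_{α,k}(n) is at most N·r/q_{k−1}. -/

import Mathlib

open Finset
open scoped Classical

/-- e(x) = exp(2πi x) -/
noncomputable def e (x : ℝ) : ℂ := Complex.exp (2 * Real.pi * Complex.I * x)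

/-- Denominators of α = [0; 1, m, 1, m, ...]. -/
def ostq (m : ℕ) : ℕ → ℕ
  | 0 => 1
  | 1 => 1
  | (i+2) => (if (i+2) % 2 = 0 then m * ostq m (i+1) else ostq m (i+1)) + ostq m i

/-- φ(m) = (m + 2 + √(m² + 4m))/2. -/
noncomputable def phi (m : ℕ) : ℝ := ((m : ℝ) + 2 + Real.sqrt ((m : ℝ)^2 + 4*m)) / 2

/-- Partial quotients of α = [0; 1, m, 1, m, ...] : a_j = m if j even, 1 if j odd. -/
def pq (m j : ℕ) : ℕ := if j % 2 = 0 then m else 1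

/-- Markov condition on digit sequences. -/
def Markov (m : ℕ) (ε : ℕ → ℕ) : Prop :=
  ε 0 < pq m 1 ∧ ∀ i, 1 ≤ i → ε i ≤ pq m (i+1) ∧ (ε i = pq m (i+1) → ε (i-1) = 0)

/-- ε is the (finitely supported) Ostrowski digit sequence of n. -/
def IsOstRep (m n : ℕ) (ε : ℕ → ℕ) : Prop :=
  Markov m ε ∧ ∃ K, (∀ j, K ≤ j → ε j = 0) ∧ n = ∑ i ∈ Finset.range K, ε i * ostq m i

/-- The Ostrowski digits of n. -/
noncomputable def ostEps (m n : ℕ) : ℕ → ℕ :=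
  if h : ∃ ε, IsOstRep m n ε then h.choose else fun _ => 0

/-- Ostrowski sum-of-digits function S_α. -/
noncomputable def Sfull (m n : ℕ) : ℕ := ∑ᶠ i, ostEps m n i

/-- Truncated Ostrowski sum-of-digits function S_{α,k}. -/
noncomputable def Strunc (m k n : ℕ) : ℕ := ∑ i ∈ Finset.range k, ostEps m n i

/-- Distance to the nearest integer. -/
noncomputable def nint (x : ℝ) : ℝ := |x - round x|

/-
Call the integers whose Ostrowski digits of index ≥ k agree a block. Splicing low digits below
high ones shows that blocks are intervals of length q_{k-1} or q_k (the shorter one when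
ε_k = a_{k+1}, since the Markov condition then forbids the digit ε_{k-1}), and S_α - S_{α,k} is
constant on each block. So n can only be counted if n + r leaves the block of n, which happens for
at most r of the at least q_{k-1} points of a block.
-/

lemma sub_max_mul_le {s x t Q r : ℕ} (hsx : s ≤ x) (hxt : x ≤ t) (hQ : s + Q ≤ t) :
    (x - max s (t - r)) * Q ≤ (x - s) * r := by
  rcases le_or_gt Q r with hQr | hrQ
  · exact Nat.mul_le_mul (by omega) hQr
  rcases le_or_gt x (t - r) with h | h
  · simp [show x - max s (t - r) = 0 by omega]
  obtain ⟨q, rfl⟩ := Nat.exists_eq_add_of_lt hrQ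
  obtain ⟨l, hl⟩ := Nat.exists_eq_add_of_le hQ
  rw [show x - max s (t - r) = x - s - (q + 1 + l) by omega]
  obtain ⟨c, hc⟩ : ∃ c, x - s = q + 1 + l + c := ⟨x - s - (q + 1 + l), by omega⟩
  have hcr : c ≤ r := by omega
  rw [hc, Nat.add_sub_cancel_left]
  nlinarith

theorem card_filter_blockEnd_le_mul_le {b e : ℕ → ℕ} {Q : ℕ} (r : ℕ)
    (hb : ∀ n, b n ≤ n) (he : ∀ n, n < e n) (hQ : ∀ n, b n + Q ≤ e n)
    (hconst : ∀ n x, b n ≤ x → x ≤ n → e x = e n) (N : ℕ) :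
    #{n ∈ range N | e n ≤ n + r} * Q ≤ N * r := by
  induction N using Nat.strong_induction_on with
  | _ N ih =>
  rcases N with _ | N
  · simp
  set s := b N
  set t := e N
  -- the block `[s, t)` of `N` contributes only its points within `r` of `t`
  have hsub : {n ∈ range (N + 1) | e n ≤ n + r} ⊆
      {n ∈ range s | e n ≤ n + r} ∪ Ico (max s (t - r)) (N + 1) := by
    intro n hn
    simp only [mem_filter, mem_range] at hn
    by_cases hns : n < s
    · exact mem_union_left _ (by simp [hns, hn.2])
    · have := hconst N n (by omega) (by omega)
      exact mem_union_right _ (by simp only [mem_Ico]; omega)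
  have hsN := hb N
  have hrest : (N + 1 - max s (t - r)) * Q ≤ (N + 1 - s) * r :=
    sub_max_mul_le (by omega) (he N) (hQ N)
  calc #{n ∈ range (N + 1) | e n ≤ n + r} * Q
      ≤ (#{n ∈ range s | e n ≤ n + r} + (N + 1 - max s (t - r))) * Q := by
        gcongr
        exact (card_le_card hsub).trans ((card_union_le _ _).trans (by simp))
    _ ≤ s * r + (N + 1 - s) * r := by
        rw [add_mul]; exact add_le_add (ih s (by omega)) hrest
    _ = (N + 1) * r := by rw [← add_mul]; congr 1; omega

lemma ostq_add_two (m i : ℕ) : ostq m (i + 2) = pq m (i + 2) * ostq m (i + 1) + ostq m i := by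
  rw [ostq, pq]
  split_ifs <;> simp

lemma one_le_pq {m : ℕ} (hm : 0 < m) (j : ℕ) : 1 ≤ pq m j := by
  unfold pq
  split_ifs <;> omega

lemma ostq_pos (m : ℕ) : ∀ i, 0 < ostq m i
  | 0 | 1 => Nat.one_pos
  | i + 2 => by rw [ostq_add_two]; exact Nat.add_pos_right _ (ostq_pos m i)

lemma ostq_monotone {m : ℕ} (hm : 0 < m) : Monotone (ostq m) := by
  refine monotone_nat_of_le_succ fun i => ?_
  rcases i with _ | i
  · rfl
  · rw [ostq_add_two]
    exact Nat.le_add_right_of_le (Nat.le_mul_of_pos_left _ (one_le_pq hm _))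

lemma lt_ostq_add_two {m : ℕ} (hm : 0 < m) : ∀ n, n < ostq m (n + 2)
  | 0 => ostq_pos m 2
  | n + 1 => by
    have h1 : n < ostq m (n + 1 + 1) := lt_ostq_add_two hm n
    have h2 := ostq_pos m (n + 1)
    have h3 := Nat.le_mul_of_pos_left (ostq m (n + 1 + 1)) (one_le_pq hm (n + 1 + 2))
    rw [ostq_add_two]
    omega

lemma lt_ostq_of_add_two_le {m : ℕ} (hm : 0 < m) {n K : ℕ} (h : n + 2 ≤ K) : n < ostq m K :=
  (lt_ostq_add_two hm n).trans_le (ostq_monotone hm h)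

namespace Markov

variable {m : ℕ} {ε δ : ℕ → ℕ}

lemma apply_zero (h : Markov m ε) : ε 0 = 0 := by
  simpa [pq] using h.1

lemma zero (m : ℕ) : Markov m 0 :=
  ⟨by simp [pq], fun _ _ => ⟨Nat.zero_le _, fun _ => rfl⟩⟩

lemma single (hm : 0 < m) {j d : ℕ} (hj : 0 < j) (hd : d ≤ pq m (j + 1)) :
    Markov m (Pi.single j d) := by
  refine ⟨by simp [hj.ne, pq], fun i _ => ?_⟩
  rcases eq_or_ne i j with rfl | hij
  · simp [hd, show i - 1 ≠ i by omega]
  · have := one_le_pq hm (i + 1)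
    simp only [Pi.single_apply, hij, if_false]
    omega

lemma ite_lt (hδ : Markov m δ) (hε : Markov m ε) {k : ℕ} (hk : 0 < k)
    (hjoin : ε k = pq m (k + 1) → δ (k - 1) = 0) :
    Markov m (fun i => if i < k then δ i else ε i) := by
  refine ⟨by simpa [hk] using hδ.1, fun i hi => ?_⟩
  rcases lt_trichotomy i k with hik | rfl | hik
  · simpa [hik, show i - 1 < k by omega] using hδ.2 i hi
  · simpa [show i - 1 < i by omega] using And.intro (hε.2 i hi).1 hjoin
  · simpa [show ¬ i < k by omega, show ¬ i - 1 < k by omega] using hε.2 i hi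

lemma sum_lt_ostq (hm : 0 < m) (h : Markov m ε) : ∀ k, ∑ i ∈ range k, ε i * ostq m i < ostq m k
  | 0 => by simp [ostq_pos]
  | 1 => by simp [h.apply_zero, ostq_pos]
  | k + 2 => by
    have ihk := h.sum_lt_ostq hm k
    have ihk1 := h.sum_lt_ostq hm (k + 1)
    obtain ⟨hle, hmax⟩ : ε (k + 1) ≤ pq m (k + 2) ∧ (ε (k + 1) = pq m (k + 2) → ε k = 0) :=
      h.2 (k + 1) (by omega)
    rw [sum_range_succ, ostq_add_two]
    rcases hle.lt_or_eq with hlt | heq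
    · have := Nat.mul_le_mul_right (ostq m (k + 1)) (Nat.succ_le_of_lt hlt)
      rw [Nat.succ_mul] at this
      omega
    · rw [sum_range_succ, hmax heq, heq]
      omega

lemma le_of_sum_range_succ_le (hm : 0 < m) (hδ : Markov m δ) {L : ℕ}
    (h : ∑ i ∈ range (L + 1), ε i * ostq m i ≤ ∑ i ∈ range (L + 1), δ i * ostq m i) :
    ε L ≤ δ L := by
  by_contra! hlt
  have hlow := hδ.sum_lt_ostq hm L
  have := Nat.mul_le_mul_right (ostq m L) (Nat.succ_le_of_lt hlt)
  rw [Nat.succ_mul] at this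
  rw [sum_range_succ, sum_range_succ] at h
  omega

lemma eq_of_sum_range_eq (hm : 0 < m) (hε : Markov m ε) (hδ : Markov m δ) {L : ℕ}
    (h : ∑ i ∈ range L, ε i * ostq m i = ∑ i ∈ range L, δ i * ostq m i) :
    ∀ i < L, ε i = δ i := by
  induction L with
  | zero => simp
  | succ L ih =>
    have htop : ε L = δ L :=
      (hδ.le_of_sum_range_succ_le hm h.le).antisymm (hε.le_of_sum_range_succ_le hm h.ge)
    rw [sum_range_succ, sum_range_succ, htop, Nat.add_right_cancel_iff] at h
    intro i hi
    rcases (Nat.lt_succ_iff.mp hi).lt_or_eq with hi | rfl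
    exacts [ih h i hi, htop]

end Markov

lemma sum_range_ite_lt {M : Type*} [AddCommMonoid M] (f g : ℕ → M) {k K : ℕ} (h : k ≤ K) :
    ∑ i ∈ range K, (if i < k then f i else g i) = ∑ i ∈ range k, f i + ∑ i ∈ Ico k K, g i := by
  rw [← sum_range_add_sum_Ico _ h]
  congr 1
  · exact sum_congr rfl fun i hi => if_pos (mem_range.1 hi)
  · exact sum_congr rfl fun i hi => if_neg (by simp only [mem_Ico] at hi; omega)

lemma IsOstRep.sum_range_eq {m n K : ℕ} {ε : ℕ → ℕ} (h : IsOstRep m n ε)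
    (hK : ∀ i, K ≤ i → ε i = 0) : ∑ i ∈ range K, ε i * ostq m i = n := by
  obtain ⟨-, K₀, hK₀, rfl⟩ := h
  have stable (K' : ℕ) (hK' : ∀ i, K' ≤ i → ε i = 0) (h : K' ≤ max K K₀) :
      ∑ i ∈ range (max K K₀), ε i * ostq m i = ∑ i ∈ range K', ε i * ostq m i :=
    eventually_constant_sum (fun i hi => by simp [hK' i hi]) h
  rw [← stable K hK (le_max_left _ _), stable K₀ hK₀ (le_max_right _ _)]

section Representation

variable {m : ℕ} (hm : 0 < m)
include hm

lemma exists_markov_sum_range_eq :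
    ∀ K n, n < ostq m K → ∃ ε, Markov m ε ∧ (∀ i, K ≤ i → ε i = 0) ∧
      ∑ i ∈ range K, ε i * ostq m i = n
  | 0, n, hn | 1, n, hn => ⟨0, Markov.zero m, fun _ _ => rfl, by simp_all [ostq]⟩
  | K + 2, n, hn => by
    set q := ostq m (K + 1)
    have hq : 0 < q := ostq_pos m (K + 1)
    have hdiv := Nat.div_add_mod' n q
    have hqK : ostq m K ≤ q := ostq_monotone hm K.le_succ
    have hn' : n < pq m (K + 2) * q + ostq m K := ostq_add_two m K ▸ hn
    have hd : n / q ≤ pq m (K + 2) :=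
      Nat.lt_succ_iff.mp ((Nat.div_lt_iff_lt_mul hq).mpr (by rw [Nat.succ_mul]; omega))
    -- a maximal top digit `n / q` leaves a remainder below `q_K`, so the digit below it vanishes
    obtain ⟨ε, hε, hzero, hsum, hjoin⟩ : ∃ ε, Markov m ε ∧ (∀ i, K + 1 ≤ i → ε i = 0) ∧
        ∑ i ∈ range (K + 1), ε i * ostq m i = n % q ∧ (n / q = pq m (K + 2) → ε K = 0) := by
      by_cases hmax : n / q = pq m (K + 2)
      · rw [hmax] at hdiv
        obtain ⟨ε, hε, hzero, hsum⟩ := exists_markov_sum_range_eq K (n % q) (by omega)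
        refine ⟨ε, hε, fun i hi => hzero i (by omega), ?_, fun _ => hzero K le_rfl⟩
        rw [sum_range_succ, hsum, hzero K le_rfl, zero_mul, add_zero]
      · obtain ⟨ε, hε, hzero, hsum⟩ := exists_markov_sum_range_eq (K + 1) (n % q) (Nat.mod_lt _ hq)
        exact ⟨ε, hε, hzero, hsum, fun h => absurd h hmax⟩
    refine ⟨_,
      hε.ite_lt (Markov.single hm K.add_one_pos hd) K.add_one_pos (by simpa using hjoin),
      fun i hi => ?_, ?_⟩
    · simp [show ¬ i < K + 1 by omega, show i ≠ K + 1 by omega]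
    · simp only [ite_mul]
      rw [sum_range_ite_lt _ _ (by omega), hsum, show K + 2 = K + 1 + 1 from rfl,
        Nat.Ico_succ_singleton, sum_singleton, Pi.single_eq_same]
      show n % q + n / q * q = n
      omega

lemma IsOstRep.unique {n : ℕ} {ε δ : ℕ → ℕ} (h : IsOstRep m n ε) (h' : IsOstRep m n δ) :
    ε = δ := by
  obtain ⟨K, hK, -⟩ := h.2
  obtain ⟨K', hK', -⟩ := h'.2
  have hsum : ∑ i ∈ range (max K K'), ε i * ostq m i = ∑ i ∈ range (max K K'), δ i * ostq m i :=
    (h.sum_range_eq fun i hi => hK i (le_of_max_le_left hi)).trans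
      (h'.sum_range_eq fun i hi => hK' i (le_of_max_le_right hi)).symm
  funext i
  by_cases hi : i < max K K'
  · exact h.1.eq_of_sum_range_eq hm h'.1 hsum i hi
  · rw [hK i (by omega), hK' i (by omega)]

lemma IsOstRep.ostEps_eq {n : ℕ} {ε : ℕ → ℕ} (h : IsOstRep m n ε) : ostEps m n = ε := by
  have hex : ∃ ε, IsOstRep m n ε := ⟨ε, h⟩
  rw [ostEps, dif_pos hex]
  exact hex.choose_spec.unique hm h

lemma exists_isOstRep_of_lt {n K : ℕ} (h : n < ostq m K) :
    ∃ ε, IsOstRep m n ε ∧ ∀ i, K ≤ i → ε i = 0 :=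
  let ⟨ε, hε, hzero, hsum⟩ := exists_markov_sum_range_eq hm K n h
  ⟨ε, ⟨hε, K, hzero, hsum.symm⟩, hzero⟩

lemma isOstRep_ostEps (n : ℕ) : IsOstRep m n (ostEps m n) := by
  obtain ⟨ε, hε, -⟩ := exists_isOstRep_of_lt hm (lt_ostq_add_two hm n)
  rwa [hε.ostEps_eq hm]

lemma ostEps_eq_zero_of_lt {n K i : ℕ} (h : n < ostq m K) (hi : K ≤ i) : ostEps m n i = 0 := by
  obtain ⟨ε, hε, hzero⟩ := exists_isOstRep_of_lt hm h
  rw [hε.ostEps_eq hm]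
  exact hzero i hi

lemma sum_range_ostEps_mul_ostq {n K : ℕ} (h : n < ostq m K) :
    ∑ i ∈ range K, ostEps m n i * ostq m i = n :=
  (isOstRep_ostEps hm n).sum_range_eq fun _ => ostEps_eq_zero_of_lt hm h

lemma Sfull_eq_sum_range {n K : ℕ} (h : n < ostq m K) : Sfull m n = ∑ i ∈ range K, ostEps m n i :=
  finsum_eq_sum_of_support_subset _ fun i hi => by
    simp only [Function.mem_support, coe_range, Set.mem_Iio] at hi ⊢
    by_contra! hKi
    exact hi (ostEps_eq_zero_of_lt hm h hKi)

end Representation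

-- `n` with its Ostrowski digits of index `< k` set to zero (the subtraction never truncates)
noncomputable def blockStart (m k n : ℕ) : ℕ := n - ∑ i ∈ range k, ostEps m n i * ostq m i

noncomputable def blockLen (m k n : ℕ) : ℕ :=
  if ostEps m n k = pq m (k + 1) then ostq m (k - 1) else ostq m k

section Blocks

variable {m : ℕ} (hm : 0 < m)
include hm

lemma ostq_pred_le_blockLen (k n : ℕ) : ostq m (k - 1) ≤ blockLen m k n := by
  unfold blockLen
  split_ifs
  exacts [le_rfl, ostq_monotone hm (Nat.sub_le k 1)]

lemma blockLen_le_ostq (k n : ℕ) : blockLen m k n ≤ ostq m k := by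
  unfold blockLen
  split_ifs
  exacts [ostq_monotone hm (Nat.sub_le k 1), le_rfl]

lemma blockStart_eq_sum_Ico {k n K : ℕ} (hkK : k ≤ K) (hK : n < ostq m K) :
    blockStart m k n = ∑ i ∈ Ico k K, ostEps m n i * ostq m i := by
  have := sum_range_add_sum_Ico (fun i => ostEps m n i * ostq m i) hkK
  rw [sum_range_ostEps_mul_ostq hm hK] at this
  unfold blockStart
  omega

lemma sum_range_add_blockStart (k n : ℕ) :
    ∑ i ∈ range k, ostEps m n i * ostq m i + blockStart m k n = n := by
  have hK : n < ostq m (k + n + 2) := lt_ostq_of_add_two_le hm (by omega)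
  rw [blockStart_eq_sum_Ico hm (by omega) hK, sum_range_add_sum_Ico _ (by omega),
    sum_range_ostEps_mul_ostq hm hK]

lemma sum_range_lt_blockLen {k : ℕ} (hk : 0 < k) (n : ℕ) :
    ∑ i ∈ range k, ostEps m n i * ostq m i < blockLen m k n := by
  have hε := (isOstRep_ostEps hm n).1
  unfold blockLen
  split_ifs with htop
  · obtain ⟨k, rfl⟩ : ∃ k', k = k' + 1 := ⟨k - 1, by omega⟩
    have hk : ostEps m n k = 0 := by simpa using (hε.2 (k + 1) (by omega)).2 htop
    simpa [sum_range_succ, hk] using hε.sum_lt_ostq hm k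
  · exact hε.sum_lt_ostq hm k

lemma blockStart_le (k n : ℕ) : blockStart m k n ≤ n :=
  (sum_range_add_blockStart hm k n).le.trans' le_add_self

lemma lt_blockStart_add_blockLen {k : ℕ} (hk : 0 < k) (n : ℕ) :
    n < blockStart m k n + blockLen m k n := by
  have := sum_range_lt_blockLen hm hk n
  have := sum_range_add_blockStart hm k n
  omega

lemma ostEps_blockStart_add {k n y : ℕ} (hk : 0 < k) (hy : y < blockLen m k n) :
    ostEps m (blockStart m k n + y) = fun i => if i < k then ostEps m y i else ostEps m n i := by
  have hK : n < ostq m (k + n + 2) := lt_ostq_of_add_two_le hm (by omega)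
  have hyk : y < ostq m k := hy.trans_le (blockLen_le_ostq hm k n)
  refine IsOstRep.ostEps_eq hm ⟨(isOstRep_ostEps hm y).1.ite_lt (isOstRep_ostEps hm n).1 hk
    fun htop => ?_, k + n + 2, fun i hi => ?_, ?_⟩
  · exact ostEps_eq_zero_of_lt hm (by simpa [blockLen, htop] using hy) le_rfl
  · simp [show ¬ i < k by omega, ostEps_eq_zero_of_lt hm hK hi]
  · simp only [ite_mul]
    rw [sum_range_ite_lt _ _ (by omega), sum_range_ostEps_mul_ostq hm hyk,
      ← blockStart_eq_sum_Ico hm (by omega) hK, add_comm]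

lemma ostEps_eq_of_mem_block {k n x : ℕ} (hk : 0 < k) (hx : blockStart m k n ≤ x)
    (hx' : x < blockStart m k n + blockLen m k n) {i : ℕ} (hi : k ≤ i) :
    ostEps m x i = ostEps m n i := by
  obtain ⟨y, rfl⟩ := Nat.exists_eq_add_of_le hx
  rw [ostEps_blockStart_add hm hk (by omega)]
  exact if_neg (by omega)

lemma blockStart_eq_of_ostEps_eq {k x n : ℕ} (h : ∀ i, k ≤ i → ostEps m x i = ostEps m n i) :
    blockStart m k x = blockStart m k n := by
  have hx : x < ostq m (x + n + k + 2) := lt_ostq_of_add_two_le hm (by omega)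
  have hn : n < ostq m (x + n + k + 2) := lt_ostq_of_add_two_le hm (by omega)
  rw [blockStart_eq_sum_Ico hm (by omega) hx, blockStart_eq_sum_Ico hm (by omega) hn]
  exact sum_congr rfl fun i hi => by rw [h i (mem_Ico.1 hi).1]

lemma blockStart_add_blockLen_eq {k n x : ℕ} (hk : 0 < k) (hx : blockStart m k n ≤ x)
    (hx' : x < blockStart m k n + blockLen m k n) :
    blockStart m k x + blockLen m k x = blockStart m k n + blockLen m k n := by
  have h := fun i (hi : k ≤ i) => ostEps_eq_of_mem_block hm hk hx hx' hi
  rw [blockStart_eq_of_ostEps_eq hm h, blockLen, blockLen, h k le_rfl]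

lemma Sfull_sub_Strunc_eq_of_ostEps_eq {k x n : ℕ}
    (h : ∀ i, k ≤ i → ostEps m x i = ostEps m n i) :
    (Sfull m x : ℤ) - Strunc m k x = Sfull m n - Strunc m k n := by
  have hx : x < ostq m (x + n + k + 2) := lt_ostq_of_add_two_le hm (by omega)
  have hn : n < ostq m (x + n + k + 2) := lt_ostq_of_add_two_le hm (by omega)
  rw [Sfull_eq_sum_range hm hx, Sfull_eq_sum_range hm hn, Strunc, Strunc,
    ← sum_range_add_sum_Ico _ (by omega : k ≤ x + n + k + 2),
    ← sum_range_add_sum_Ico _ (by omega : k ≤ x + n + k + 2),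
    sum_congr rfl fun i hi => h i (mem_Ico.1 hi).1]
  push_cast
  ring

end Blocks

theorem stmt11 (m : ℕ) (hm : 2 ≤ m) (N k r : ℕ) (hk : 2 ≤ k) :
    (((Finset.range N).filter (fun n =>
        (Sfull m (n + r) : ℤ) - (Sfull m n : ℤ) ≠
          (Strunc m k (n + r) : ℤ) - (Strunc m k n : ℤ))).card : ℝ)
      ≤ (N : ℝ) * r / (ostq m (k - 1) : ℝ) := by
  have hm₀ : 0 < m := by omega
  have hk₀ : 0 < k := by omega
  have hbad (n : ℕ) (hne : (Sfull m (n + r) : ℤ) - Sfull m n ≠ Strunc m k (n + r) - Strunc m k n) :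
      blockStart m k n + blockLen m k n ≤ n + r := by
    by_contra! hlt
    have := Sfull_sub_Strunc_eq_of_ostEps_eq hm₀ fun i hi =>
      ostEps_eq_of_mem_block hm₀ hk₀ ((blockStart_le hm₀ k n).trans (Nat.le_add_right n r)) hlt hi
    omega
  have hcount := card_filter_blockEnd_le_mul_le r (blockStart_le hm₀ k)
    (lt_blockStart_add_blockLen hm₀ hk₀)
    (fun n => Nat.add_le_add_left (ostq_pred_le_blockLen hm₀ k n) _)
    (fun n x hx hxn => blockStart_add_blockLen_eq hm₀ hk₀ hx
      (hxn.trans_lt (lt_blockStart_add_blockLen hm₀ hk₀ n))) N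
  have hcard := (Nat.mul_le_mul_right (ostq m (k - 1))
    (card_le_card (monotone_filter_right _ fun n _ => hbad n))).trans hcount
  rw [le_div_iff₀ (by exact_mod_cast ostq_pos m (k - 1))]
  exact_mod_cast hcard
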